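/- For every ℓ ≥ 1, the sequences defined by the mex recursion satisfy lim_{n→∞} a_n/n = φ and lim_{n→∞} b_n/n = φ², where φ = (1+√5)/2 is the golden ratio. -/

import Mathlib

/-!
Put `c = ℓ + 1`. The numbers below `a n` are `0, …, ℓ`, the `a i` with `i < n`, and the `b i`
below `a n`, which are `b 0, …, b (k-1)` for some `k` because `b` increases. Hence
`a n = n + c + k`, and `k` is also the number of indices `i` with `a i ≤ n`. This
self-similarity is solved by `a n ≈ n φ` since `1 + 1/φ = φ`, and a strong induction keeps
`a n - n φ` between `-2` and `c + 3`. Then `b n - n φ² = a n - n φ + c` is bounded too.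
-/

/-- The minimum excluded value of a set of natural numbers. -/
noncomputable def mex (S : Set ℕ) : ℕ := sInf {m : ℕ | m ∉ S}

/-- `MexSeq ℓ a b` says that `a`, `b` are the sequences defined by
    `a 0 = ℓ+1`, `b 0 = 2ℓ+2`, and for `n ≥ 1`:
    `a n = mex({a i, b i : i < n} ∪ {0,…,ℓ})`, `b n = a n + n + ℓ + 1`. -/
def MexSeq (ℓ : ℕ) (a b : ℕ → ℕ) : Prop :=
  a 0 = ℓ + 1 ∧ b 0 = 2 * ℓ + 2 ∧
  (∀ n : ℕ, 1 ≤ n →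
    a n = mex ({m : ℕ | ∃ i < n, m = a i ∨ m = b i} ∪ {m : ℕ | m ≤ ℓ})) ∧
  (∀ n : ℕ, 1 ≤ n → b n = a n + n + ℓ + 1)

noncomputable def phi : ℝ := (1 + Real.sqrt 5) / 2

open Finset Filter Topology Real
open scoped goldenRatio

lemma mex_notMem {S : Set ℕ} (hS : S.Finite) : mex S ∉ S :=
  Nat.sInf_mem hS.infinite_compl.nonempty

lemma mem_of_lt_mex {S : Set ℕ} {m : ℕ} (hm : m < mex S) : m ∈ S :=
  not_not.mp (Nat.notMem_of_lt_sInf hm)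

lemma Monotone.exists_lt_iff_lt {α : Type*} [LinearOrder α] {b : ℕ → α} (hb : Monotone b)
    {x : α} {n : ℕ} (hx : x ≤ b n) : ∃ k ≤ n, ∀ i, b i < x ↔ i < k := by
  classical
  have hex : ∃ k, x ≤ b k := ⟨n, hx⟩
  refine ⟨Nat.find hex, Nat.find_min' hex hx, fun i => ⟨fun hi => ?_, fun hi => ?_⟩⟩
  · by_contra hk
    exact hi.not_ge ((Nat.find_spec hex).trans (hb (not_lt.mp hk)))
  · exact lt_of_not_ge (Nat.find_min hex hi)

namespace MexSeq

variable {ℓ : ℕ} {a b : ℕ → ℕ}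

lemma b_eq (h : MexSeq ℓ a b) (n : ℕ) : b n = a n + n + ℓ + 1 := by
  rcases Nat.eq_zero_or_pos n with rfl | hn
  · rw [h.2.1, h.1]; ring
  · exact h.2.2.2 n hn

lemma finite_excluded (n : ℕ) :
    ({m : ℕ | ∃ i < n, m = a i ∨ m = b i} ∪ {m : ℕ | m ≤ ℓ}).Finite := by
  refine Set.Finite.union (((Set.finite_Iio n).image a).union ((Set.finite_Iio n).image b)
    |>.subset ?_) (Set.finite_Iic ℓ)
  rintro m ⟨i, hi, rfl | rfl⟩
  exacts [.inl ⟨i, hi, rfl⟩, .inr ⟨i, hi, rfl⟩]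

lemma a_notMem (h : MexSeq ℓ a b) {n : ℕ} (hn : 1 ≤ n) :
    a n ∉ {m : ℕ | ∃ i < n, m = a i ∨ m = b i} ∪ {m : ℕ | m ≤ ℓ} := by
  rw [h.2.2.1 n hn]
  exact mex_notMem (finite_excluded n)

lemma lt_a (h : MexSeq ℓ a b) (n : ℕ) : ℓ < a n := by
  rcases Nat.eq_zero_or_pos n with rfl | hn
  · rw [h.1]; omega
  · exact lt_of_not_ge fun hle => h.a_notMem hn (.inr hle)

lemma a_ne_of_lt (h : MexSeq ℓ a b) {i n : ℕ} (hin : i < n) : a n ≠ a i ∧ a n ≠ b i :=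
  ⟨fun he => h.a_notMem (by omega) (.inl ⟨i, hin, .inl he⟩),
    fun he => h.a_notMem (by omega) (.inl ⟨i, hin, .inr he⟩)⟩

lemma mem_of_lt_a (h : MexSeq ℓ a b) {m n : ℕ} (hm : m < a n) :
    m ≤ ℓ ∨ ∃ i < n, m = a i ∨ m = b i := by
  rcases Nat.eq_zero_or_pos n with rfl | hn
  · rw [h.1] at hm; exact .inl (by omega)
  · rw [h.2.2.1 n hn] at hm
    exact (mem_of_lt_mex hm).symm

lemma strictMono_a (h : MexSeq ℓ a b) : StrictMono a := by
  intro i n hin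
  rcases lt_trichotomy (a n) (a i) with hlt | heq | hgt
  · rcases h.mem_of_lt_a hlt with hle | ⟨j, hj, he | he⟩
    · exact absurd hle (h.lt_a n).not_ge
    · exact absurd he (h.a_ne_of_lt (hj.trans hin)).1
    · exact absurd he (h.a_ne_of_lt (hj.trans hin)).2
  · exact absurd heq (h.a_ne_of_lt hin).1
  · exact hgt

lemma strictMono_b (h : MexSeq ℓ a b) : StrictMono b := by
  intro i j hij
  have := h.strictMono_a hij
  rw [h.b_eq, h.b_eq]
  omega

lemma a_ne_b (h : MexSeq ℓ a b) (i j : ℕ) : a i ≠ b j := by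
  rcases lt_or_ge j i with hji | hij
  · exact (h.a_ne_of_lt hji).2
  · have := h.strictMono_a.monotone hij
    rw [h.b_eq]
    omega

lemma a_eq_add (h : MexSeq ℓ a b) {n k : ℕ} (hk : ∀ i, b i < a n ↔ i < k) :
    a n = n + (ℓ + 1) + k := by
  have hrange : range (a n) = (range (ℓ + 1) ∪ (range n).image a) ∪ (range k).image b := by
    ext m
    simp only [mem_union, mem_range, mem_image]
    constructor
    · intro hm
      rcases h.mem_of_lt_a hm with hle | ⟨i, hi, rfl | rfl⟩
      · exact .inl (.inl (by omega))
      · exact .inl (.inr ⟨i, hi, rfl⟩)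
      · exact .inr ⟨i, (hk i).mp hm, rfl⟩
    · rintro ((hm | ⟨i, hi, rfl⟩) | ⟨i, hi, rfl⟩)
      · have := h.lt_a n; omega
      · exact h.strictMono_a hi
      · exact (hk i).mpr hi
  have hd₁ : Disjoint (range (ℓ + 1)) ((range n).image a) := by
    simp only [disjoint_left, mem_range, mem_image, not_exists, not_and]
    intro m hm i _ he
    have := h.lt_a i
    omega
  have hd₂ : Disjoint (range (ℓ + 1) ∪ (range n).image a) ((range k).image b) := by
    simp only [disjoint_left, mem_union, mem_range, mem_image, not_exists, not_and]
    rintro m (hm | ⟨i, _, rfl⟩) j _ he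
    · have := h.lt_a j
      rw [h.b_eq] at he
      omega
    · exact h.a_ne_b i j he.symm
  have hcard := congrArg card hrange
  rw [card_union_of_disjoint hd₂, card_union_of_disjoint hd₁,
    card_image_of_injective _ h.strictMono_a.injective,
    card_image_of_injective _ h.strictMono_b.injective, card_range, card_range, card_range,
    card_range] at hcard
  omega

lemma exists_a_eq_add (h : MexSeq ℓ a b) (n : ℕ) :
    ∃ k ≤ n, a n = n + (ℓ + 1) + k ∧ ∀ i, a i ≤ n ↔ i < k := by
  obtain ⟨k, hkn, hk⟩ :=
    h.strictMono_b.monotone.exists_lt_iff_lt (x := a n) (n := n) (by rw [h.b_eq]; omega)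
  have hcount := h.a_eq_add hk
  have hbk : a n < b k :=
    lt_of_le_of_ne (not_lt.mp fun hlt => lt_irrefl k ((hk k).mp hlt)) (h.a_ne_b n k)
  rw [h.b_eq] at hbk
  refine ⟨k, hkn, hcount, fun i => ⟨fun hi => ?_, fun hi => ?_⟩⟩
  · by_contra hik
    have := h.strictMono_a.monotone (not_lt.mp hik)
    omega
  · have hlast := (hk (k - 1)).mpr (by omega)
    have := h.strictMono_a.monotone (show i ≤ k - 1 by omega)
    rw [h.b_eq] at hlast
    omega

end MexSeq

lemma three_halves_lt_goldenRatio : (3 : ℝ) / 2 < φ := by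
  nlinarith [goldenRatio_sq, goldenRatio_lt_two, goldenRatio_pos]

lemma mul_goldenRatio_sub_two_lt {n k c : ℝ} (hc : 0 ≤ c) (h : n < k * φ + (c + 3)) :
    n * φ - 2 < n + c + k := by
  refine lt_of_mul_lt_mul_right ?_ goldenRatio_pos.le
  have hφ : (n * φ - 2) * φ = n * φ + n - 2 * φ := by linear_combination n * goldenRatio_sq
  have hcφ : c ≤ c * φ := le_mul_of_one_le_right hc one_lt_goldenRatio.le
  linarith [three_halves_lt_goldenRatio]

lemma add_lt_mul_goldenRatio_add {n k c : ℝ} (h : k * φ - 2 < n) :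
    n + c + (k + 1) < n * φ + (c + 3) := by
  refine lt_of_mul_lt_mul_right ?_ goldenRatio_pos.le
  have hφ : (n * φ + (c + 3)) * φ = n * φ + n + (c + 3) * φ := by
    linear_combination n * goldenRatio_sq
  linarith [one_lt_goldenRatio]

theorem abs_sub_mul_goldenRatio_lt {a : ℕ → ℕ} {c : ℕ}
    (ha : ∀ n, ∃ k ≤ n, a n = n + c + k ∧ ∀ i, a i ≤ n ↔ i < k) (n : ℕ) :
    |(a n : ℝ) - n * φ| < c + 3 := by
  suffices ∀ n : ℕ, (n : ℝ) * φ - 2 < a n ∧ (a n : ℝ) < n * φ + (c + 3) from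
    abs_sub_lt_iff.mpr ⟨by linarith [this n], by linarith [this n]⟩
  intro n
  induction n using Nat.strong_induction_on with
  | _ n ih =>
  obtain ⟨k, hkn, hank, hk⟩ := ha n
  have hc : (0 : ℝ) ≤ c := c.cast_nonneg
  have hn : (0 : ℝ) ≤ n := n.cast_nonneg
  rw [hank]
  push_cast
  constructor
  · apply mul_goldenRatio_sub_two_lt hc
    rcases hkn.lt_or_eq with hlt | rfl
    · have : (n : ℝ) < a k := by
        exact_mod_cast lt_of_not_ge fun hle => lt_irrefl k ((hk k).mp hle)
      linarith [(ih k hlt).2]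
    · nlinarith [one_lt_goldenRatio]
  · rcases k with _ | k
    · push_cast; nlinarith [one_lt_goldenRatio]
    · have : (a k : ℝ) ≤ n := by exact_mod_cast (hk k).mpr k.lt_succ_self
      push_cast
      exact add_lt_mul_goldenRatio_add (by linarith [(ih k (by omega)).1])

lemma tendsto_div_natCast_of_abs_sub_mul_le {u : ℕ → ℝ} {r C : ℝ}
    (h : ∀ n, |u n - n * r| ≤ C) : Tendsto (fun n => u n / n) atTop (𝓝 r) := by
  rw [tendsto_iff_norm_sub_tendsto_zero]
  refine squeeze_zero_norm' ?_ (tendsto_const_div_atTop_nhds_zero_nat C)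
  filter_upwards [eventually_gt_atTop 0] with n hn
  have hn' : (0 : ℝ) < n := by exact_mod_cast hn
  rw [norm_norm, Real.norm_eq_abs, div_sub' hn'.ne', abs_div, abs_of_pos hn']
  exact div_le_div_of_nonneg_right (by simpa only [mul_comm] using h n) hn'.le

theorem mexSeq_limits_general (ℓ : ℕ) (a b : ℕ → ℕ)
    (hab : MexSeq ℓ a b) :
    Filter.Tendsto (fun n : ℕ => (a n : ℝ) / n) Filter.atTop (nhds phi) ∧
    Filter.Tendsto (fun n : ℕ => (b n : ℝ) / n) Filter.atTop (nhds (phi ^ 2)) := by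
  rw [show phi = φ from rfl]
  have ha (n : ℕ) : |(a n : ℝ) - n * φ| ≤ ℓ + 4 := by
    have := abs_sub_mul_goldenRatio_lt hab.exists_a_eq_add n
    push_cast at this
    linarith
  have hb (n : ℕ) : |(b n : ℝ) - n * φ ^ 2| ≤ 2 * ℓ + 5 := by
    calc |(b n : ℝ) - n * φ ^ 2| = |((a n : ℝ) - n * φ) + (ℓ + 1)| := by
          rw [hab.b_eq, goldenRatio_sq]; push_cast; congr 1; ring
      _ ≤ |(a n : ℝ) - n * φ| + (ℓ + 1) := (abs_add_le _ _).trans_eq (by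
          rw [abs_of_pos (by positivity : (0 : ℝ) < ℓ + 1)])
      _ ≤ 2 * ℓ + 5 := by linarith [ha n]
  exact ⟨tendsto_div_natCast_of_abs_sub_mul_le ha, tendsto_div_natCast_of_abs_sub_mul_le hb⟩

theorem mexSeq_limits (ℓ : ℕ) (hℓ : 1 ≤ ℓ) (a b : ℕ → ℕ)
    (hab : MexSeq ℓ a b) :
    Filter.Tendsto (fun n : ℕ => (a n : ℝ) / n) Filter.atTop (nhds phi) ∧
    Filter.Tendsto (fun n : ℕ => (b n : ℝ) / n) Filter.atTop (nhds (phi ^ 2)) :=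
  mexSeq_limits_general ℓ a b hab
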